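/- arXiv:2403.08079 — 3 statements merged into one kernel-verified Lean document; each statement's English description precedes it below -/
import Mathlib

section
/- Let C be a finite type, let p : C → ℝ satisfy 0 ≤ p c ≤ 1 for every c, and let μ be the product probability measure on (C → Bool) whose coordinates are independent with μ-probability p c that coordinate c equals true. Let P ⊆ C, let M⁺ and M⁻ be finite types, let T : M⁺ → Set C and U : M⁻ → Set C, and fix c₀ ∈ C. Define the events E_P = {z | ∀ c ∈ P, z c = false}, E = {z | ∀ m : M⁺, ∃ c ∈ T m, z c = true}, E₋ = {z | ∀ m' : M⁻, ∃ c ∈ U m', z c = true}, and D = E_P ∩ E ∩ E₋. Assume: (i) c₀ ∉ P; (ii) c₀ ∈ T m for every m : M⁺; (iii) c₀ ∉ U m' for every m' : M⁻; (iv) (⋃ m, T m) is disjoint from P ∪ (⋃ m', U m'); and (v) μ(D) > 0. Then the conditional probability μ({z | z c₀ = true} | D) equals (p c₀) / μ(E). -/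
open scoped Classical

/-- The weight of a configuration `z : C → Bool` under independent Bernoulli
coordinates with success probabilities `p`. -/
noncomputable def bernWeight {C : Type*} [Fintype C] (p : C → ℝ) (z : C → Bool) : ℝ :=
  ∏ c : C, if z c then p c else 1 - p c

/-- The product probability measure on `C → Bool` with independent Bernoulli
coordinates: probability of a set `A` of configurations. -/
noncomputable def bernProb {C : Type*} [Fintype C] (p : C → ℝ) (A : Set (C → Bool)) : ℝ :=
  ∑ z : C → Bool, if z ∈ A then bernWeight p z else 0

/-- Conditional probability of `A` given `B` under the Bernoulli product measure. -/
noncomputable def bernCondProb {C : Type*} [Fintype C] (p : C → ℝ)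
    (A B : Set (C → Bool)) : ℝ :=
  bernProb p (A ∩ B) / bernProb p B

lemma sum_prod_bool {I : Type*} [Fintype I] [DecidableEq I] (g : I → Bool → ℝ) :
    ∑ y : I → Bool, ∏ i, g i (y i) = ∏ i, (g i true + g i false) := by
  rw [← Fintype.prod_sum (f := g)]
  exact Finset.prod_congr rfl fun i _ => by simp [Fintype.sum_bool, add_comm]

lemma sum_bernWeight_eq_one {I : Type*} [Fintype I] [DecidableEq I] (q : I → ℝ) :
    ∑ y : I → Bool, ∏ i, (if y i then q i else 1 - q i) = 1 := by
  rw [sum_prod_bool (g := fun i b => if b then q i else 1 - q i)]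
  simp

/-- `A` depends only on coordinates in `S`. -/
def DepOn {C : Type*} (A : Set (C → Bool)) (S : Set C) : Prop :=
  ∀ z w : C → Bool, (∀ c ∈ S, z c = w c) → (z ∈ A ↔ w ∈ A)

lemma depOn_mono {C : Type*} {A : Set (C → Bool)} {S S' : Set C} (h : DepOn A S)
    (hss : S ⊆ S') : DepOn A S' := fun z w hzw => h z w fun c hc => hzw c (hss hc)

lemma depOn_inter {C : Type*} {A B : Set (C → Bool)} {S : Set C} (hA : DepOn A S)
    (hB : DepOn B S) : DepOn (A ∩ B) S := fun z w h => and_congr (hA z w h) (hB z w h)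

lemma bernProb_coord {C : Type*} [Fintype C] (p : C → ℝ) (c₀ : C) :
    bernProb p {z | z c₀ = true} = p c₀ := by
  classical
  have key : ∀ z : C → Bool, (if z c₀ = true then bernWeight p z else 0)
      = ∏ c, (if c = c₀ then (if z c then p c else 0)
        else (if z c then p c else 1 - p c)) := by
    intro z
    by_cases hz : z c₀ = true
    · rw [if_pos hz, bernWeight]
      exact Finset.prod_congr rfl fun c _ => by by_cases h : c = c₀ <;> simp [h, hz]
    · rw [if_neg hz]
      exact (Finset.prod_eq_zero (Finset.mem_univ c₀) (by simp [hz])).symm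
  have h1 : bernProb p {z : C → Bool | z c₀ = true}
      = ∑ z : C → Bool, ∏ c, (if c = c₀ then (if z c then p c else 0)
        else (if z c then p c else 1 - p c)) := by
    rw [bernProb]
    refine Finset.sum_congr rfl fun z _ => ?_
    simp only [Set.mem_setOf_eq]
    convert key z using 2
  rw [h1, sum_prod_bool (g := fun c b => if c = c₀ then (if b then p c else 0)
    else (if b then p c else 1 - p c))]
  have h2 : (∏ c : C, (if c = c₀ then p c else 1 : ℝ)) = p c₀ := by simp
  refine Eq.trans (Finset.prod_congr rfl fun c _ => ?_) h2
  by_cases h : c = c₀ <;> simp [h]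

lemma bern_factor {C : Type*} [Fintype C] (p : C → ℝ) {S : Set C} {A B : Set (C → Bool)}
    (hA : DepOn A S) (hB : DepOn B Sᶜ) :
    bernProb p (A ∩ B) = bernProb p A * bernProb p B := by
  classical
  set e := (Equiv.piEquivPiSubtypeProd (fun c => c ∈ S) (fun _ => Bool)).symm with he
  set wS : ({c // c ∈ S} → Bool) → ℝ := fun x => ∏ c, (if x c then p c.1 else 1 - p c.1) with hwS
  set wT : ({c // ¬ c ∈ S} → Bool) → ℝ := fun y => ∏ c, (if y c then p c.1 else 1 - p c.1) with hwT
  have hmergeS : ∀ x y (c : {c // c ∈ S}), e (x, y) c.1 = x c := by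
    intro x y c
    simp [he, Equiv.piEquivPiSubtypeProd_symm_apply, c.2]
  have hmergeT : ∀ x y (c : {c // ¬ c ∈ S}), e (x, y) c.1 = y c := by
    intro x y c
    simp [he, Equiv.piEquivPiSubtypeProd_symm_apply, c.2]
  have hw : ∀ x y, bernWeight p (e (x, y)) = wS x * wT y := by
    intro x y
    rw [bernWeight, ← Fintype.prod_subtype_mul_prod_subtype (fun c => c ∈ S)
      (fun c => if e (x, y) c then p c else 1 - p c)]
    congr 1
    · exact Finset.prod_congr rfl fun c _ => by rw [hmergeS]
    · exact Finset.prod_congr rfl fun c _ => by rw [hmergeT]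
  set y₀ : {c // ¬ c ∈ S} → Bool := fun _ => false with hy0
  set x₀ : {c // c ∈ S} → Bool := fun _ => false with hx0
  have hAm : ∀ x y, (e (x, y) ∈ A) ↔ (e (x, y₀) ∈ A) := by
    intro x y
    exact hA _ _ fun c hc => by
      rw [show c = (⟨c, hc⟩ : {c // c ∈ S}).1 from rfl, hmergeS, hmergeS]
  have hBm : ∀ x y, (e (x, y) ∈ B) ↔ (e (x₀, y) ∈ B) := by
    intro x y
    exact hB _ _ fun c hc => by
      rw [show c = (⟨c, hc⟩ : {c // ¬ c ∈ S}).1 from rfl, hmergeT, hmergeT]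
  have key : ∀ X : Set (C → Bool), bernProb p X
      = ∑ x, ∑ y, (if e (x, y) ∈ X then wS x * wT y else 0) := by
    intro X
    rw [bernProb, ← Equiv.sum_comp e (fun z => if z ∈ X then bernWeight p z else 0),
      Fintype.sum_prod_type]
    exact Finset.sum_congr rfl fun x _ => Finset.sum_congr rfl fun y _ => by rw [hw]
  set a := ∑ x, (if e (x, y₀) ∈ A then wS x else 0) with ha
  set b := ∑ y, (if e (x₀, y) ∈ B then wT y else 0) with hb
  have hab : bernProb p (A ∩ B) = a * b := by
    rw [key, ha, hb, Finset.sum_mul_sum]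
    refine Finset.sum_congr rfl fun x _ => Finset.sum_congr rfl fun y _ => ?_
    rw [Set.mem_inter_iff, hAm x y, hBm x y]
    by_cases h1 : e (x, y₀) ∈ A <;> by_cases h2 : e (x₀, y) ∈ B <;> simp [h1, h2]
  have hsT : ∑ y, wT y = 1 := sum_bernWeight_eq_one fun c : {c // ¬ c ∈ S} => p c.1
  have hsS : ∑ x, wS x = 1 := sum_bernWeight_eq_one fun c : {c // c ∈ S} => p c.1
  have hAa : bernProb p A = a := by
    rw [key, ha]
    refine Finset.sum_congr rfl fun x _ => ?_
    calc ∑ y, (if e (x, y) ∈ A then wS x * wT y else 0)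
        = ∑ y, (if e (x, y₀) ∈ A then wS x else 0) * wT y := by
          refine Finset.sum_congr rfl fun y _ => ?_
          rw [hAm x y]
          by_cases h : e (x, y₀) ∈ A <;> simp [h]
      _ = (if e (x, y₀) ∈ A then wS x else 0) * ∑ y, wT y := by rw [Finset.mul_sum]
      _ = _ := by rw [hsT, mul_one]
  have hBb : bernProb p B = b := by
    rw [key, hb]
    calc ∑ x, ∑ y, (if e (x, y) ∈ B then wS x * wT y else 0)
        = ∑ x, wS x * ∑ y, (if e (x₀, y) ∈ B then wT y else 0) := by
          refine Finset.sum_congr rfl fun x _ => ?_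
          rw [Finset.mul_sum]
          refine Finset.sum_congr rfl fun y _ => ?_
          rw [hBm x y]
          by_cases h : e (x₀, y) ∈ B <;> simp [h]
      _ = (∑ x, wS x) * ∑ y, (if e (x₀, y) ∈ B then wT y else 0) := by rw [Finset.sum_mul]
      _ = _ := by rw [hsS, one_mul]
  rw [hab, hAa, hBb]

theorem stmt0 {C : Type*} [Fintype C] (p : C → ℝ) (hp : ∀ c, 0 ≤ p c ∧ p c ≤ 1)
    (P : Set C) {Mp Mm : Type*} [Fintype Mp] [Fintype Mm]
    (T : Mp → Set C) (U : Mm → Set C) (c₀ : C)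
    (EP : Set (C → Bool)) (hEP : EP = {z | ∀ c ∈ P, z c = false})
    (E : Set (C → Bool)) (hE : E = {z | ∀ m : Mp, ∃ c ∈ T m, z c = true})
    (Em : Set (C → Bool)) (hEm : Em = {z | ∀ m' : Mm, ∃ c ∈ U m', z c = true})
    (D : Set (C → Bool)) (hD : D = EP ∩ E ∩ Em)
    (h1 : c₀ ∉ P)
    (h2 : ∀ m : Mp, c₀ ∈ T m)
    (h3 : ∀ m' : Mm, c₀ ∉ U m')
    (h4 : Disjoint (⋃ m, T m) (P ∪ ⋃ m', U m'))
    (h5 : 0 < bernProb p D) :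
    bernCondProb p {z | z c₀ = true} D = p c₀ / bernProb p E := by
  classical
  have depEP : DepOn EP P := by
    rw [hEP]; intro z w h
    simp only [Set.mem_setOf_eq]
    exact forall₂_congr fun c hc => by rw [h c hc]
  have depE : DepOn E (⋃ m, T m) := by
    rw [hE]; intro z w h
    simp only [Set.mem_setOf_eq]
    exact forall_congr' fun m => exists_congr fun c => and_congr_right fun hc => by
      rw [h c (Set.mem_iUnion.2 ⟨m, hc⟩)]
  have depEm : DepOn Em (⋃ m', U m') := by
    rw [hEm]; intro z w h
    simp only [Set.mem_setOf_eq]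
    exact forall_congr' fun m' => exists_congr fun c => and_congr_right fun hc => by
      rw [h c (Set.mem_iUnion.2 ⟨m', hc⟩)]
  have depCoord : DepOn {z | z c₀ = true} ({c₀} : Set C) := by
    intro z w h
    simp only [Set.mem_setOf_eq]
    rw [h c₀ rfl]
  have depB0 : DepOn (EP ∩ Em) (P ∪ ⋃ m', U m') :=
    depOn_inter (depOn_mono depEP Set.subset_union_left)
      (depOn_mono depEm Set.subset_union_right)
  have hsub1 : (P ∪ ⋃ m', U m') ⊆ (⋃ m, T m)ᶜ := fun c hc =>
    Set.disjoint_right.1 h4 hc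
  have hsub2 : (P ∪ ⋃ m', U m') ⊆ ({c₀} : Set C)ᶜ := by
    intro c hc hc0
    rw [Set.mem_singleton_iff] at hc0
    subst hc0
    rcases hc with hc | hc
    · exact h1 hc
    · rcases Set.mem_iUnion.1 hc with ⟨m', hm'⟩
      exact h3 m' hm'
  have fact1 : bernProb p (E ∩ (EP ∩ Em)) = bernProb p E * bernProb p (EP ∩ Em) :=
    bern_factor p depE (depOn_mono depB0 hsub1)
  have fact2 : bernProb p ({z | z c₀ = true} ∩ (EP ∩ Em))
      = p c₀ * bernProb p (EP ∩ Em) := by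
    rw [bern_factor p depCoord (depOn_mono depB0 hsub2), bernProb_coord]
  have hDE : D = E ∩ (EP ∩ Em) := by
    rw [hD]; ext z; simp only [Set.mem_inter_iff]; tauto
  have hcap : {z : C → Bool | z c₀ = true} ∩ D = {z | z c₀ = true} ∩ (EP ∩ Em) := by
    rw [hD]; ext z
    simp only [Set.mem_inter_iff, Set.mem_setOf_eq]
    constructor
    · rintro ⟨h0, ⟨hp', _⟩, hm'⟩; exact ⟨h0, hp', hm'⟩
    · rintro ⟨h0, hp', hm'⟩
      exact ⟨h0, ⟨hp', by rw [hE]; exact fun m => ⟨c₀, h2 m, h0⟩⟩, hm'⟩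
  have hpos : 0 < bernProb p E * bernProb p (EP ∩ Em) := by
    rw [← fact1, ← hDE]; exact h5
  have hb0 : bernProb p (EP ∩ Em) ≠ 0 := by
    intro h; rw [h, mul_zero] at hpos; exact lt_irrefl _ hpos
  rw [bernCondProb, hcap, fact2, hDE, fact1, mul_div_mul_right _ _ hb0]
end

section
/- Let C and M be finite types and R : C → M → Prop a relation, let p : C → ℝ satisfy 0 ≤ p c ≤ 1 for every c, and let μ be the product probability measure on (C → Bool) whose coordinates are independent with μ-probability p c that coordinate c equals true. Let V : Finset (Finset C) be the collection of all minimal covers of M (each minimal cover regarded as a Finset of C), and let F = {z : C → Bool | ∃ S ∈ V, ∀ c ∈ S, z c = true}. Then μ(F) = Σ over nonempty subsets W ⊆ V of (−1)^(|W|+1) · ∏_{c ∈ ⋃_{S ∈ W} S} p c. -/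
open scoped Classical

/-- `S` is a cover of `M` (w.r.t. relation `R`) if every `m : M` is covered by
some element of `S`. -/
def IsCover {C M : Type*} (R : C → M → Prop) (S : Set C) : Prop :=
  ∀ m : M, ∃ c ∈ S, R c m

/-- `S` is a minimal cover of `M` if it is a cover and no proper subset of `S`
is a cover. -/
def IsMinimalCover {C M : Type*} (R : C → M → Prop) (S : Set C) : Prop :=
  IsCover R S ∧ ∀ S' : Set C, S' ⊂ S → ¬ IsCover R S'

/-- Marginalization: the probability that all coordinates in `T` are true. -/
lemma bernEvent {C : Type*} [Fintype C] (p : C → ℝ) (T : Finset C) :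
    (∑ z : C → Bool, (if ∀ c ∈ T, z c = true then (1:ℝ) else 0) * bernWeight p z)
      = ∏ c ∈ T, p c := by
  classical
  have key : ∀ z : C → Bool,
      (if ∀ c ∈ T, z c = true then (1:ℝ) else 0) * bernWeight p z
        = ∏ c : C, (if c ∈ T then (if z c then p c else 0)
            else (if z c then p c else 1 - p c)) := by
    intro z
    by_cases h : ∀ c ∈ T, z c = true
    · rw [if_pos h, one_mul, bernWeight]
      refine Finset.prod_congr rfl fun c _ => ?_
      by_cases hc : c ∈ T
      · simp [hc, h c hc]
      · simp [hc]
    · rw [if_neg h, zero_mul]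
      push_neg at h
      obtain ⟨c, hc, hzc⟩ := h
      symm
      apply Finset.prod_eq_zero (Finset.mem_univ c)
      simp [hc, hzc]
  simp_rw [key]
  have := Fintype.prod_sum (fun (c : C) (b : Bool) =>
    if c ∈ T then (if b then p c else 0) else (if b then p c else 1 - p c))
  rw [← this]
  have : ∀ c : C, (∑ b : Bool, if c ∈ T then (if b then p c else 0)
      else (if b then p c else 1 - p c)) = if c ∈ T then p c else 1 := by
    intro c
    by_cases hc : c ∈ T <;> simp [hc, Fintype.sum_bool] <;> ring
  simp_rw [this]
  rw [Finset.prod_ite_mem, Finset.univ_inter]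

theorem stmt4 {C M : Type*} [Fintype C] [Fintype M] (R : C → M → Prop)
    (p : C → ℝ) (hp : ∀ c, 0 ≤ p c ∧ p c ≤ 1)
    (V : Finset (Finset C))
    (hV : ∀ S : Finset C, S ∈ V ↔ IsMinimalCover R (S : Set C))
    (F : Set (C → Bool)) (hF : F = {z | ∃ S ∈ V, ∀ c ∈ S, z c = true}) :
    bernProb p F =
      ∑ W ∈ V.powerset.filter (fun W => W.Nonempty),
        (-1 : ℝ) ^ (W.card + 1) * ∏ c ∈ W.sup id, p c := by
  classical
  set x : Finset C → (C → Bool) → ℝ :=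
    fun S z => if ∀ c ∈ S, z c = true then 1 else 0 with hxdef
  have hprodW : ∀ (W : Finset (Finset C)) (z : C → Bool),
      ∏ S ∈ W, x S z = x (W.sup id) z := by
    intro W z
    by_cases h : ∀ c ∈ W.sup id, z c = true
    · rw [show x (W.sup id) z = 1 from if_pos h]
      refine Finset.prod_eq_one fun S hS => ?_
      exact if_pos fun c hc => h c (Finset.mem_sup.2 ⟨S, hS, hc⟩)
    · rw [show x (W.sup id) z = 0 from if_neg h]
      push_neg at h
      obtain ⟨c, hc, hzc⟩ := h
      obtain ⟨S, hS, hcS⟩ := Finset.mem_sup.1 hc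
      refine Finset.prod_eq_zero hS (if_neg ?_)
      push_neg
      exact ⟨c, hcS, hzc⟩
  have hexp : ∀ z : C → Bool, ∏ S ∈ V, (1 - x S z)
      = 1 + ∑ W ∈ V.powerset.filter (fun W => W.Nonempty),
          (-1:ℝ) ^ W.card * x (W.sup id) z := by
    intro z
    have h1 : ∏ S ∈ V, (1 - x S z) = ∑ W ∈ V.powerset, ∏ S ∈ W, (-(x S z)) := by
      have := Finset.prod_add (fun S => -(x S z)) (fun _ => (1:ℝ)) V
      simp only [Finset.prod_const_one, mul_one] at this
      rw [← this]
      refine Finset.prod_congr rfl fun S _ => by ring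
    have h2 : ∀ W : Finset (Finset C),
        ∏ S ∈ W, (-(x S z)) = (-1:ℝ) ^ W.card * x (W.sup id) z := by
      intro W
      rw [← hprodW W z]
      rw [show (fun S => -(x S z)) = fun S => (-1:ℝ) * x S z from funext fun S => by ring]
      rw [Finset.prod_mul_distrib, Finset.prod_const]
    simp_rw [h1, h2]
    rw [← Finset.sum_filter_add_sum_filter_not V.powerset (fun W => W.Nonempty)]
    have hempt : V.powerset.filter (fun W => ¬ W.Nonempty) = {∅} := by
      ext W
      simp [Finset.not_nonempty_iff_eq_empty]
      intro h; subst h; exact Finset.empty_subset _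
    rw [hempt]
    have : x ((∅ : Finset (Finset C)).sup id) z = 1 := by
      refine if_pos fun c hc => ?_
      simp at hc
    rw [Finset.sum_singleton, Finset.sup_empty]
    simp only [Finset.sup_empty] at this
    rw [this]
    simp [add_comm]
  have hind : ∀ z : C → Bool, (if z ∈ F then (1:ℝ) else 0)
      = ∑ W ∈ V.powerset.filter (fun W => W.Nonempty),
          (-1:ℝ) ^ (W.card + 1) * x (W.sup id) z := by
    intro z
    have hrw : ∑ W ∈ V.powerset.filter (fun W => W.Nonempty),
        (-1:ℝ) ^ (W.card + 1) * x (W.sup id) z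
        = 1 - ∏ S ∈ V, (1 - x S z) := by
      rw [hexp z]
      have hneg : ∀ W : Finset (Finset C), (-1:ℝ) ^ (W.card + 1) * x (W.sup id) z
          = -((-1:ℝ) ^ W.card * x (W.sup id) z) := fun W => by ring
      simp_rw [hneg]
      rw [Finset.sum_neg_distrib]
      ring
    rw [hrw]
    by_cases h : z ∈ F
    · rw [if_pos h]
      rw [hF] at h
      obtain ⟨S, hS, hall⟩ := h
      have : ∏ S ∈ V, (1 - x S z) = 0 :=
        Finset.prod_eq_zero hS (by simp only [hxdef]; rw [if_pos hall]; ring)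
      rw [this]; ring
    · rw [if_neg h]
      rw [hF] at h
      simp only [Set.mem_setOf_eq] at h
      push_neg at h
      have : ∏ S ∈ V, (1 - x S z) = 1 := by
        refine Finset.prod_eq_one fun S hS => ?_
        have hx : x S z = 0 := by
          simp only [hxdef]
          rw [if_neg]
          intro hall
          obtain ⟨c, hc, hne⟩ := h S hS
          exact hne (hall c hc)
        rw [hx]; ring
      rw [this]; ring
  calc bernProb p F
      = ∑ z : C → Bool, (if z ∈ F then (1:ℝ) else 0) * bernWeight p z := by
        unfold bernProb
        refine Finset.sum_congr rfl fun z _ => ?_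
        by_cases h : z ∈ F <;> simp [h]
    _ = ∑ z : C → Bool, ∑ W ∈ V.powerset.filter (fun W => W.Nonempty),
          (-1:ℝ) ^ (W.card + 1) * x (W.sup id) z * bernWeight p z := by
        simp_rw [hind, Finset.sum_mul]
    _ = ∑ W ∈ V.powerset.filter (fun W => W.Nonempty),
          (-1:ℝ) ^ (W.card + 1) * ∑ z : C → Bool, x (W.sup id) z * bernWeight p z := by
        rw [Finset.sum_comm]
        refine Finset.sum_congr rfl fun W _ => ?_
        rw [Finset.mul_sum]
        exact Finset.sum_congr rfl fun z _ => by ring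
    _ = _ := by
        refine Finset.sum_congr rfl fun W _ => ?_
        rw [show (∑ z : C → Bool, x (W.sup id) z * bernWeight p z)
            = ∏ c ∈ W.sup id, p c from bernEvent p (W.sup id)]
end

section
/- Let C and M be finite types, let R : C → M → Prop be a decidable relation, let N = card C, and let z : C → ℕ take values in {0,1} and satisfy constraint [C1]: for every m : M, Σ_{c : C} z c · (if R c m then 1 else 0) ≥ 1. Then the set S = {c | z c = 1} is a minimal cover of M if and only if there exists l : C → M → ℕ taking values in {0,1} such that for every g with z g = 1: [C2] for every m : M, Σ_{c ≠ g} z c · (if R c m then 1 else 0) ≤ N · (1 − l g m), and [C3] Σ_{m : M} l g m ≥ 1. -/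
theorem stmt9 {C M : Type*} [Fintype C] [Fintype M] [DecidableEq C]
    (R : C → M → Prop) [∀ c m, Decidable (R c m)]
    (N : ℕ) (hN : N = Fintype.card C)
    (z : C → ℕ) (hz : ∀ c, z c ≤ 1)
    (hC1 : ∀ m : M, 1 ≤ ∑ c : C, z c * (if R c m then 1 else 0)) :
    IsMinimalCover R {c | z c = 1} ↔
      ∃ l : C → M → ℕ, (∀ g m, l g m ≤ 1) ∧
        ∀ g, z g = 1 →
          (∀ m : M, ∑ c ∈ Finset.univ.erase g, z c * (if R c m then 1 else 0)
              ≤ N * (1 - l g m)) ∧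
          1 ≤ ∑ m : M, l g m := by
  have hcov : IsCover R {c | z c = 1} := by
    intro m
    have h := hC1 m
    by_contra hcon
    push_neg at hcon
    have : ∑ c : C, z c * (if R c m then 1 else 0) = 0 := by
      apply Finset.sum_eq_zero
      intro c _
      by_cases hzc : z c = 1
      · have := hcon c hzc
        simp [this]
      · have h0 : z c = 0 := by have := hz c; omega
        simp [h0]
    omega
  constructor
  · rintro ⟨_, hmin⟩
    refine ⟨fun g m => if (∑ c ∈ Finset.univ.erase g, z c * (if R c m then 1 else 0)) = 0
        then 1 else 0, fun g m => by dsimp only; split <;> omega, fun g hg => ⟨?_, ?_⟩⟩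
    · intro m
      dsimp only
      by_cases h : (∑ c ∈ Finset.univ.erase g, z c * (if R c m then 1 else 0)) = 0
      · rw [if_pos h, h]
        exact Nat.zero_le _
      · rw [if_neg h]
        simp only [Nat.sub_zero, mul_one]
        calc ∑ c ∈ Finset.univ.erase g, z c * (if R c m then 1 else 0)
            ≤ ∑ c ∈ Finset.univ.erase g, 1 := by
              apply Finset.sum_le_sum
              intro c _
              have := hz c
              split <;> omega
          _ ≤ ∑ _c : C, 1 := Finset.sum_le_sum_of_subset (Finset.erase_subset _ _)
          _ = N := by simp [hN]
    · have hsub : {c | z c = 1} \ {g} ⊂ {c | z c = 1} := by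
        constructor
        · exact Set.diff_subset
        · intro hsup
          have := hsup (show g ∈ {c | z c = 1} from hg)
          simp at this
      have hnc := hmin _ hsub
      unfold IsCover at hnc
      push_neg at hnc
      obtain ⟨m, hm⟩ := hnc
      have hzero : ∑ c ∈ Finset.univ.erase g, z c * (if R c m then 1 else 0) = 0 := by
        apply Finset.sum_eq_zero
        intro c hc
        have hcg : c ≠ g := (Finset.mem_erase.mp hc).1
        by_cases hzc : z c = 1
        · have : ¬ R c m := hm c ⟨hzc, by simp [hcg]⟩
          simp [this]
        · have h0 : z c = 0 := by have := hz c; omega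
          simp [h0]
      have key := Finset.single_le_sum
        (f := fun m' : M => if (∑ c ∈ Finset.univ.erase g,
            z c * (if R c m' then 1 else 0)) = 0 then (1:ℕ) else 0)
        (fun m' _ => Nat.zero_le _) (Finset.mem_univ m)
      beta_reduce at key ⊢
      rw [if_pos hzero] at key
      exact key
  · rintro ⟨l, hl, hlg⟩
    refine ⟨hcov, ?_⟩
    intro S' hS' hcov'
    obtain ⟨g, hgS, hgS'⟩ := Set.exists_of_ssubset hS'
    have hsub := hS'.1
    have hg : z g = 1 := hgS
    obtain ⟨h2, h3⟩ := hlg g hg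
    have : ∃ m, l g m = 1 := by
      by_contra hcon
      push_neg at hcon
      have : ∑ m : M, l g m = 0 := by
        apply Finset.sum_eq_zero
        intro m _
        have := hl g m
        have := hcon m
        omega
      omega
    obtain ⟨m, hlm⟩ := this
    have h2m := h2 m
    rw [hlm] at h2m
    simp only [Nat.sub_self, mul_zero, Nat.le_zero] at h2m
    obtain ⟨c, hcS', hRc⟩ := hcov' m
    have hzc : z c = 1 := hsub hcS'
    have hcg : c ≠ g := fun h => hgS' (h ▸ hcS')
    have hle : z c * (if R c m then 1 else 0) ≤
        ∑ c' ∈ Finset.univ.erase g, z c' * (if R c' m then 1 else 0) :=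
      Finset.single_le_sum (f := fun c' => z c' * (if R c' m then 1 else 0))
        (fun c' _ => Nat.zero_le _)
        (Finset.mem_erase.mpr ⟨hcg, Finset.mem_univ c⟩)
    rw [h2m] at hle
    simp [hzc, hRc] at hle
end
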